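/- Assume t_max ≥ ∑_{b∈L} r_b and the set 𝔏 = {b ∈ L : r_b > 0} is nonempty. Let D = t_max − ∑_{b∈L} r_b and ℓ = ⌊D/|𝔏|⌋, and let {t_b}_{b∈L} be any equal-opportunity assignment, i.e., t_b = 0 whenever r_b = 0, t_b ∈ {r_b+ℓ, r_b+ℓ+1} for every b ∈ 𝔏, and ∑_{b∈L} t_b = t_max. Write SOL = ∑_{b∈L} E(r_b,t_b) and let OPT be the optimal value of problem (B). Then SOL ≥ (1-p)·OPT, and OPT − SOL ≤ (1-p)·∑_{b∈𝔏} ∑_{j=r_b+ℓ}^{r_b+D−1} β_p(j,r_b). -/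

import Mathlib

/-!
Telescoping Pascal's rule gives `E(r,t) = (1-p) ∑_{j<t} β_p(j,r)`, with `0 ≤ β_p(j,r) ≤ 1` and
`β_p(j,r) = 1` for `j < r`. An equal-opportunity block has `t_b ≥ r_b + ℓ`, so it earns at least
`(1-p) ∑_{j<r_b+ℓ} β_p(j,r_b)`. Any feasible assignment earns at most
`(1-p) ∑_b ∑_{j<r_b+D} β_p(j,r_b)`: a block loses one unit for each slot it lacks below `r_b` and
gains at most one unit for each slot beyond `r_b + D`, and since `∑_b t_b = ∑_b r_b + D`, the total
excess beyond `r_b + D` is at most the total deficit below `r_b`. The two bounds differ by the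
claimed gap, and the ratio bound follows from `E(r,t) ≤ r`.
-/

/-- `betaP p t r = ∑_{i=0}^{r-1} C(t,i) (1-p)^i p^(t-i)`. -/
noncomputable def betaP (p : ℝ) (t r : ℕ) : ℝ :=
  ∑ i ∈ Finset.range r, (t.choose i : ℝ) * (1 - p) ^ i * p ^ (t - i)

/-- Expected rank function `E(r,t) = ∑_{i=0}^{t} C(t,i) (1-p)^i p^(t-i) * min{i,r}`. -/
noncomputable def expRank (p : ℝ) (r t : ℕ) : ℝ :=
  ∑ i ∈ Finset.range (t + 1),
    (t.choose i : ℝ) * (1 - p) ^ i * p ^ (t - i) * ((min i r : ℕ) : ℝ)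

open Finset

theorem sum_choose_mul_pow_mul_pow_eq_one (p : ℝ) (t : ℕ) :
    ∑ i ∈ range (t + 1), (t.choose i : ℝ) * (1 - p) ^ i * p ^ (t - i) = 1 := by
  simpa [mul_comm, mul_left_comm] using (add_pow (1 - p) p t).symm

theorem betaP_eq_sum_filter (p : ℝ) (t r : ℕ) :
    betaP p t r =
      ∑ i ∈ (range (t + 1)).filter (· < r), (t.choose i : ℝ) * (1 - p) ^ i * p ^ (t - i) := by
  refine (sum_subset (fun i => by simp) fun i hi hni => ?_).symm
  simp only [mem_filter, mem_range, not_and, not_lt] at hi hni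
  rw [Nat.choose_eq_zero_of_lt (by omega), Nat.cast_zero, zero_mul, zero_mul]

theorem betaP_zero_right (p : ℝ) (t : ℕ) : betaP p t 0 = 0 := by
  simp [betaP]

theorem betaP_of_lt (p : ℝ) {t r : ℕ} (h : t < r) : betaP p t r = 1 := by
  rw [betaP_eq_sum_filter, filter_true_of_mem fun i hi => by simp at hi; omega,
    sum_choose_mul_pow_mul_pow_eq_one]

theorem expRank_succ (p : ℝ) (r t : ℕ) :
    expRank p r (t + 1) = expRank p r t + (1 - p) * betaP p t r := by
  have hpascal := sum_choose_succ_mul (R := ℝ) (fun i j => (1 - p) ^ i * p ^ j * ((min i r : ℕ) : ℝ)) t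
  have hmin : ∀ i, ((min (i + 1) r : ℕ) : ℝ) = ((min i r : ℕ) : ℝ) + if i < r then 1 else 0 := by
    intro i
    split_ifs with h
    · rw [show min (i + 1) r = min i r + 1 by omega]; push_cast; ring
    · rw [show min (i + 1) r = min i r by omega, add_zero]
  unfold expRank
  rw [betaP_eq_sum_filter, sum_filter]
  simp only [mul_assoc] at hpascal ⊢
  rw [hpascal, mul_sum, ← sum_add_distrib, ← sum_add_distrib]
  refine sum_congr rfl fun i hi => ?_
  rw [Nat.sub_add_comm (Nat.lt_succ_iff.mp (mem_range.mp hi)), hmin]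
  split_ifs <;> ring

theorem expRank_eq_mul_sum_betaP (p : ℝ) (r t : ℕ) :
    expRank p r t = (1 - p) * ∑ j ∈ range t, betaP p j r := by
  induction t with
  | zero => simp [expRank]
  | succ t ih => rw [expRank_succ, ih, sum_range_succ, mul_add]

theorem expRank_zero_left (p : ℝ) (t : ℕ) : expRank p 0 t = 0 := by
  simp [expRank]

theorem sum_range_betaP_of_le (p : ℝ) {r t : ℕ} (h : t ≤ r) :
    ∑ j ∈ range t, betaP p j r = t := by
  rw [sum_congr rfl fun j hj => betaP_of_lt p ((mem_range.mp hj).trans_le h)]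
  simp

theorem sum_tsub_le_tsub_sum {ι : Type*} (s : Finset ι) (x : ι → ℕ) (d : ℕ) :
    ∑ b ∈ s, (x b - d) ≤ ∑ b ∈ s, x b - d := by
  induction s using Finset.cons_induction with
  | empty => simp
  | cons a s ha ih => rw [sum_cons, sum_cons]; omega

theorem sum_tsub_tsub_le_sum_tsub {ι : Type*} (s : Finset ι) (x y : ι → ℕ) :
    ∑ b ∈ s, (x b - y b - (∑ b ∈ s, x b - ∑ b ∈ s, y b)) ≤ ∑ b ∈ s, (y b - x b) := by
  have hexcess := sum_tsub_le_tsub_sum s (fun b => x b - y b) (∑ b ∈ s, x b - ∑ b ∈ s, y b)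
  have hbalance : ∑ b ∈ s, (x b - y b) + ∑ b ∈ s, y b = ∑ b ∈ s, x b + ∑ b ∈ s, (y b - x b) := by
    rw [← sum_add_distrib, ← sum_add_distrib]
    exact sum_congr rfl fun b _ => by omega
  omega

theorem sum_filter_pos_eq_sum {ι : Type*} {s : Finset ι} {r : ι → ℕ} {f : ι → ℝ}
    (hf : ∀ b, r b = 0 → f b = 0) : ∑ b ∈ s.filter (fun b => 0 < r b), f b = ∑ b ∈ s, f b :=
  sum_filter_of_ne fun b _ hb => Nat.pos_of_ne_zero fun h => hb (hf b h)

section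
variable {p : ℝ} (hp0 : 0 ≤ p) (hp1 : p ≤ 1)
include hp0 hp1

theorem choose_mul_pow_mul_pow_nonneg (t i : ℕ) :
    0 ≤ (t.choose i : ℝ) * (1 - p) ^ i * p ^ (t - i) := by
  have : 0 ≤ 1 - p := by linarith
  positivity

theorem betaP_nonneg (t r : ℕ) : 0 ≤ betaP p t r :=
  sum_nonneg fun i _ => choose_mul_pow_mul_pow_nonneg hp0 hp1 t i

theorem betaP_le_one (t r : ℕ) : betaP p t r ≤ 1 := by
  rw [betaP_eq_sum_filter]
  exact (sum_le_sum_of_subset_of_nonneg (filter_subset _ _)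
    fun i _ _ => choose_mul_pow_mul_pow_nonneg hp0 hp1 t i).trans_eq
      (sum_choose_mul_pow_mul_pow_eq_one p t)

theorem expRank_le (r t : ℕ) : expRank p r t ≤ r := by
  calc expRank p r t
      ≤ ∑ i ∈ range (t + 1), (t.choose i : ℝ) * (1 - p) ^ i * p ^ (t - i) * r :=
        sum_le_sum fun i _ => mul_le_mul_of_nonneg_left (by exact_mod_cast min_le_right i r)
          (choose_mul_pow_mul_pow_nonneg hp0 hp1 t i)
    _ = r := by rw [← sum_mul, sum_choose_mul_pow_mul_pow_eq_one, one_mul]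

theorem sum_range_betaP_mono (r : ℕ) : Monotone fun t => ∑ j ∈ range t, betaP p j r :=
  fun _ _ h => sum_le_sum_of_subset_of_nonneg (range_subset_range.2 h)
    fun j _ _ => betaP_nonneg hp0 hp1 j r

theorem sum_range_betaP_le_add (r : ℕ) {a b : ℕ} (h : a ≤ b) :
    ∑ j ∈ range b, betaP p j r ≤ ∑ j ∈ range a, betaP p j r + (b - a : ℕ) := by
  rw [← sum_range_add_sum_Ico _ h]
  gcongr
  simpa using sum_le_card_nsmul (Ico a b) _ _ fun j _ => betaP_le_one hp0 hp1 j r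

theorem cast_le_sum_range_betaP (r k : ℕ) : (r : ℝ) ≤ ∑ j ∈ range (r + k), betaP p j r :=
  (sum_range_betaP_of_le p le_rfl).symm.trans_le
    (sum_range_betaP_mono hp0 hp1 r (Nat.le_add_right r k))

theorem sum_range_betaP_add_tsub_le (r t k : ℕ) :
    ∑ j ∈ range t, betaP p j r + (r - t : ℕ) ≤
      ∑ j ∈ range (r + k), betaP p j r + (t - r - k : ℕ) := by
  have hmono := sum_range_betaP_mono hp0 hp1 r
  rcases le_total t r with htr | hrt
  · have hr := cast_le_sum_range_betaP hp0 hp1 r k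
    rw [sum_range_betaP_of_le p htr, Nat.cast_sub htr]
    linarith [(t - r - k : ℕ).cast_nonneg (α := ℝ)]
  rcases le_total t (r + k) with htk | hkt
  · simpa [Nat.sub_eq_zero_of_le hrt, Nat.sub_sub, Nat.sub_eq_zero_of_le htk] using hmono htk
  · simpa [Nat.sub_eq_zero_of_le hrt, Nat.sub_sub] using sum_range_betaP_le_add hp0 hp1 r hkt

theorem mul_sum_range_betaP_le_expRank {r a t : ℕ} (h : a ≤ t) :
    (1 - p) * ∑ j ∈ range a, betaP p j r ≤ expRank p r t := by
  rw [expRank_eq_mul_sum_betaP]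
  exact mul_le_mul_of_nonneg_left (sum_range_betaP_mono hp0 hp1 r h) (by linarith)

theorem sum_expRank_le {ι : Type*} (s : Finset ι) (r t : ι → ℕ) :
    ∑ b ∈ s, expRank p (r b) (t b) ≤
      (1 - p) * ∑ b ∈ s, ∑ j ∈ range (r b + (∑ b ∈ s, t b - ∑ b ∈ s, r b)), betaP p j (r b) := by
  set d := ∑ b ∈ s, t b - ∑ b ∈ s, r b
  have hblocks := sum_le_sum fun b (_ : b ∈ s) =>
    sum_range_betaP_add_tsub_le hp0 hp1 (r b) (t b) d
  have hcomb : (∑ b ∈ s, (t b - r b - d : ℕ) : ℝ) ≤ ∑ b ∈ s, ((r b - t b : ℕ) : ℝ) := by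
    simpa only [Nat.cast_sum] using Nat.mono_cast (α := ℝ) (sum_tsub_tsub_le_sum_tsub s t r)
  simp only [sum_add_distrib] at hblocks
  simp only [expRank_eq_mul_sum_betaP, ← mul_sum]
  exact mul_le_mul_of_nonneg_left (by linarith) (by linarith)

end

theorem stmt18_general {ι : Type*} (p : ℝ) (hp0 : 0 < p) (hp1 : p < 1)
    (L : Finset ι) (r : ι → ℕ) (tmax : ℕ)
    (t : ι → ℕ)
    (hEO : ∀ b ∈ L.filter (fun b => 0 < r b),
      t b = r b + (tmax - ∑ b ∈ L, r b) / (L.filter fun b => 0 < r b).card ∨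
      t b = r b + (tmax - ∑ b ∈ L, r b) / (L.filter fun b => 0 < r b).card + 1)
    (OPT : ℝ)
    (hOPT : IsGreatest {x : ℝ | ∃ t' : ι → ℕ, (∑ b ∈ L, t' b) = tmax ∧
      x = ∑ b ∈ L, expRank p (r b) (t' b)} OPT) :
    (1 - p) * OPT ≤ ∑ b ∈ L, expRank p (r b) (t b) ∧
    OPT - (∑ b ∈ L, expRank p (r b) (t b)) ≤
      (1 - p) * ∑ b ∈ L.filter (fun b => 0 < r b),
        ∑ j ∈ Finset.Ico
          (r b + (tmax - ∑ b ∈ L, r b) / (L.filter fun b => 0 < r b).card)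
          (r b + (tmax - ∑ b ∈ L, r b)), betaP p j (r b) := by
  set 𝔏 := L.filter fun b => 0 < r b
  set D := tmax - ∑ b ∈ L, r b
  set ℓ := D / 𝔏.card
  obtain ⟨⟨t', ht'sum, rfl⟩, -⟩ := hOPT
  have hSOL : (1 - p) * ∑ b ∈ 𝔏, ∑ j ∈ range (r b + ℓ), betaP p j (r b) ≤
      ∑ b ∈ L, expRank p (r b) (t b) := by
    rw [mul_sum]
    refine (sum_le_sum fun b hb => ?_).trans_eq
      (sum_filter_pos_eq_sum fun b h => by rw [h, expRank_zero_left])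
    exact mul_sum_range_betaP_le_expRank hp0.le hp1.le (by rcases hEO b hb with h | h <;> omega)
  have hOPT : ∑ b ∈ L, expRank p (r b) (t' b) ≤
      (1 - p) * ∑ b ∈ 𝔏, ∑ j ∈ range (r b + D), betaP p j (r b) := by
    rw [sum_filter_pos_eq_sum fun b h => by simp [h, betaP_zero_right]]
    simpa only [ht'sum] using sum_expRank_le hp0.le hp1.le L r t'
  have hOPT_le_lower : ∑ b ∈ L, expRank p (r b) (t' b) ≤
      ∑ b ∈ 𝔏, ∑ j ∈ range (r b + ℓ), betaP p j (r b) := by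
    rw [sum_filter_pos_eq_sum fun b h => by simp [h, betaP_zero_right]]
    exact sum_le_sum fun b _ =>
      (expRank_le hp0.le hp1.le _ _).trans (cast_le_sum_range_betaP hp0.le hp1.le _ ℓ)
  have hsplit : ∑ b ∈ 𝔏, ∑ j ∈ range (r b + D), betaP p j (r b) =
      ∑ b ∈ 𝔏, ∑ j ∈ range (r b + ℓ), betaP p j (r b) +
        ∑ b ∈ 𝔏, ∑ j ∈ Ico (r b + ℓ) (r b + D), betaP p j (r b) := by
    rw [← sum_add_distrib]
    exact sum_congr rfl fun b _ =>
      (sum_range_add_sum_Ico _ (by simpa using Nat.div_le_self D 𝔏.card)).symm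
  constructor
  · exact (mul_le_mul_of_nonneg_left hOPT_le_lower (by linarith)).trans hSOL
  · rw [hsplit, mul_add] at hOPT
    linarith

theorem stmt18 {ι : Type*} (p : ℝ) (hp0 : 0 < p) (hp1 : p < 1)
    (L : Finset ι) (r : ι → ℕ) (tmax : ℕ)
    (hle : (∑ b ∈ L, r b) ≤ tmax)
    (hne : (L.filter fun b => 0 < r b).Nonempty)
    (t : ι → ℕ)
    (h0 : ∀ b ∈ L, r b = 0 → t b = 0)
    (hEO : ∀ b ∈ L.filter (fun b => 0 < r b),
      t b = r b + (tmax - ∑ b ∈ L, r b) / (L.filter fun b => 0 < r b).card ∨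
      t b = r b + (tmax - ∑ b ∈ L, r b) / (L.filter fun b => 0 < r b).card + 1)
    (hfeas : (∑ b ∈ L, t b) = tmax)
    (OPT : ℝ)
    (hOPT : IsGreatest {x : ℝ | ∃ t' : ι → ℕ, (∑ b ∈ L, t' b) = tmax ∧
      x = ∑ b ∈ L, expRank p (r b) (t' b)} OPT) :
    (1 - p) * OPT ≤ ∑ b ∈ L, expRank p (r b) (t b) ∧
    OPT - (∑ b ∈ L, expRank p (r b) (t b)) ≤
      (1 - p) * ∑ b ∈ L.filter (fun b => 0 < r b),
        ∑ j ∈ Finset.Ico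
          (r b + (tmax - ∑ b ∈ L, r b) / (L.filter fun b => 0 < r b).card)
          (r b + (tmax - ∑ b ∈ L, r b)), betaP p j (r b) :=
  stmt18_general p hp0 hp1 L r tmax t hEO OPT hOPT
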